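/- Let L be a metabelian Leibniz algebra and let U be a maximal nilpotent subalgebra of L. Then U ∩ L² is an abelian ideal of L, and L² = (U ∩ L²) ⊕ K where K is an ideal of L with [K,U] = K. -/

import Mathlib

/-- A (right) Leibniz algebra structure on an `F`-vector space `L`:
a bilinear bracket satisfying `[x,[y,z]] = [[x,y],z] - [[x,z],y]`. -/
structure LeibnizAlg (F : Type*) (L : Type*) [Field F] [AddCommGroup L] [Module F L] where
  bracket : L →ₗ[F] L →ₗ[F] L
  leibniz : ∀ x y z : L,
    bracket x (bracket y z) = bracket (bracket x y) z - bracket (bracket x z) y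

namespace LeibnizAlg

variable {F : Type*} {L : Type*} [Field F] [AddCommGroup L] [Module F L]

/-- The product `[M, N]` of two subspaces: the span of all brackets `[m, n]`. -/
def prod (A : LeibnizAlg F L) (M N : Submodule F L) : Submodule F L :=
  Submodule.span F {z : L | ∃ m ∈ M, ∃ n ∈ N, z = A.bracket m n}

/-- A subalgebra: a subspace closed under the product. -/
def IsSubalgebra (A : LeibnizAlg F L) (S : Submodule F L) : Prop :=
  A.prod S S ≤ S

/-- A (two-sided) ideal: `[I, L] ⊆ I` and `[L, I] ⊆ I`. -/
def IsIdeal (A : LeibnizAlg F L) (I : Submodule F L) : Prop :=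
  A.prod I ⊤ ≤ I ∧ A.prod ⊤ I ≤ I

/-- Lower central series of a subspace `U`: `lcs U 0 = U = U¹`,
`lcs U k = U^(k+1)`, i.e. `lcs U (k+1) = [lcs U k, U]`. -/
def lcs (A : LeibnizAlg F L) (U : Submodule F L) : ℕ → Submodule F L
  | 0 => U
  | k + 1 => A.prod (lcs A U k) U

/-- `U` is nilpotent: `U^(n+1) = 0` for some `n`. -/
def IsNilpotentSub (A : LeibnizAlg F L) (U : Submodule F L) : Prop :=
  ∃ n : ℕ, A.lcs U n = ⊥

/-- `U` is abelian: `[U, U] = 0`. -/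
def IsAbelian (A : LeibnizAlg F L) (U : Submodule F L) : Prop :=
  A.prod U U = ⊥

/-- An `A`-algebra: every nilpotent subalgebra is abelian. -/
def IsAAlgebra (A : LeibnizAlg F L) : Prop :=
  ∀ U : Submodule F L, A.IsSubalgebra U → A.IsNilpotentSub U → A.IsAbelian U

/-- Derived series: `derSeries 0 = L`, `derSeries (k+1) = [derSeries k, derSeries k]`. -/
def derSeries (A : LeibnizAlg F L) : ℕ → Submodule F L
  | 0 => ⊤
  | k + 1 => A.prod (derSeries A k) (derSeries A k)

/-- `L` is solvable: some term of the derived series vanishes. -/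
def IsSolvable (A : LeibnizAlg F L) : Prop :=
  ∃ n : ℕ, A.derSeries n = ⊥

/-- The centralizer `Z_L(U)` of a subspace `U`. -/
def centralizer (A : LeibnizAlg F L) (U : Submodule F L) : Submodule F L where
  carrier := {x : L | ∀ u ∈ U, A.bracket x u = 0 ∧ A.bracket u x = 0}
  add_mem' := by
    intro a b ha hb u hu
    refine ⟨?_, ?_⟩
    · rw [map_add, LinearMap.add_apply, (ha u hu).1, (hb u hu).1, add_zero]
    · rw [map_add, (ha u hu).2, (hb u hu).2, add_zero]
  zero_mem' := by
    intro u hu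
    refine ⟨?_, ?_⟩
    · rw [map_zero, LinearMap.zero_apply]
    · rw [map_zero]
  smul_mem' := by
    intro c a ha u hu
    refine ⟨?_, ?_⟩
    · rw [map_smul, LinearMap.smul_apply, (ha u hu).1, smul_zero]
    · rw [map_smul, (ha u hu).2, smul_zero]

/-- The centre of the subalgebra `M`: elements of `M` centralizing `M`. -/
def centerOf (A : LeibnizAlg F L) (M : Submodule F L) : Submodule F L :=
  M ⊓ A.centralizer M

/-- `N` is the nilradical: the largest nilpotent ideal. -/
def IsNilradical (A : LeibnizAlg F L) (N : Submodule F L) : Prop :=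
  A.IsIdeal N ∧ A.IsNilpotentSub N ∧
    ∀ I : Submodule F L, A.IsIdeal I → A.IsNilpotentSub I → I ≤ N

/-- A minimal ideal: a nonzero ideal containing no ideal other than `0` and itself. -/
def IsMinimalIdeal (A : LeibnizAlg F L) (I : Submodule F L) : Prop :=
  A.IsIdeal I ∧ I ≠ ⊥ ∧ ∀ J : Submodule F L, A.IsIdeal J → J ≤ I → J = ⊥ ∨ J = I

/-- A maximal subalgebra. -/
def IsMaximalSubalgebra (A : LeibnizAlg F L) (M : Submodule F L) : Prop :=
  A.IsSubalgebra M ∧ M ≠ ⊤ ∧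
    ∀ S : Submodule F L, A.IsSubalgebra S → M ≤ S → S = M ∨ S = ⊤

/-- `L` is φ-free: every ideal contained in all maximal subalgebras is zero. -/
def IsPhiFree (A : LeibnizAlg F L) : Prop :=
  ∀ I : Submodule F L, A.IsIdeal I →
    (∀ M : Submodule F L, A.IsMaximalSubalgebra M → I ≤ M) → I = ⊥

/-- `Asoc L`: the sum of the abelian minimal ideals. -/
def asoc (A : LeibnizAlg F L) : Submodule F L :=
  sSup {I : Submodule F L | A.IsMinimalIdeal I ∧ A.IsAbelian I}

/-- A Cartan subalgebra: a nilpotent, self-normalizing subalgebra. -/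
def IsCartan (A : LeibnizAlg F L) (C : Submodule F L) : Prop :=
  A.IsSubalgebra C ∧ A.IsNilpotentSub C ∧
    ∀ x : L, (∀ c ∈ C, A.bracket x c ∈ C ∧ A.bracket c x ∈ C) → x ∈ C

/-- A maximal nilpotent subalgebra. -/
def IsMaxNilpotentSubalgebra (A : LeibnizAlg F L) (U : Submodule F L) : Prop :=
  A.IsSubalgebra U ∧ A.IsNilpotentSub U ∧
    ∀ V : Submodule F L, A.IsSubalgebra V → A.IsNilpotentSub V → U ≤ V → V = U

end LeibnizAlg

/-! Write `B = L²`. Because `L` is metabelian, right multiplications commute with each other and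
with left multiplications on `B`. Hence the right multiplications by `U` form an abelian Lie
algebra `T` of endomorphisms of `B`, and both summands of the Fitting decomposition `B = B₀ ⊕ B₁`
of the `T`-module `B` are ideals of `L`. Nilpotency of `U` gives `U ∩ B ⊆ B₀`. Conversely `T` acts
nilpotently on the abelian ideal `B₀`, so `U + B₀` is a nilpotent subalgebra and maximality of `U`
gives `B₀ ⊆ U`. Thus `U ∩ B = B₀`, and `K = B₁` satisfies `[K, U] = [T, B₁] = B₁`. -/

attribute [local instance 100] LieRing.ofAssociativeRing

namespace LieSubalgebra

variable {R M : Type*} [CommRing R] [AddCommGroup M] [Module R M]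

def lieModuleEndOfCommute (T : LieSubalgebra R (Module.End R M)) (f : Module.End R M)
    (hf : ∀ t ∈ T, Commute t f) : M →ₗ⁅R,T⁆ M :=
  { f with map_lie' := fun {t m} => (LinearMap.congr_fun (hf t t.2) m).symm }

end LieSubalgebra

namespace LieModule

section Commute

variable {R M : Type*} [CommRing R] [AddCommGroup M] [Module R M]
  {T : LieSubalgebra R (Module.End R M)} [LieRing.IsNilpotent T]
  {f : Module.End R M}

lemma mem_genWeightSpace_of_commute (hf : ∀ t ∈ T, Commute t f) {χ : T → R} {m : M}
    (hm : m ∈ genWeightSpace M χ) : f m ∈ genWeightSpace M χ :=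
  map_genWeightSpace_le (T.lieModuleEndOfCommute f hf) (LieSubmodule.mem_map_of_mem hm)

lemma mem_posFittingComp_of_commute (hf : ∀ t ∈ T, Commute t f) {m : M}
    (hm : m ∈ posFittingComp R T M) : f m ∈ posFittingComp R T M :=
  map_posFittingComp_le (T.lieModuleEndOfCommute f hf) (LieSubmodule.mem_map_of_mem hm)

end Commute

variable (R L M : Type*) [CommRing R] [LieRing L] [LieAlgebra R L] [AddCommGroup M] [Module R M]
  [LieRingModule L M] [LieModule R L M] [LieRing.IsNilpotent L] [IsNoetherian R M]
  [IsArtinian R M]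

lemma lie_top_posFittingComp :
    ⁅(⊤ : LieIdeal R L), posFittingComp R L M⁆ = posFittingComp R L M := by
  obtain ⟨n, hn⟩ := Filter.eventually_atTop.mp (eventually_iInf_lowerCentralSeries_eq R L M)
  have h := hn (n + 1) n.le_succ
  rw [lowerCentralSeries_succ, ← hn n le_rfl, iInf_lowerCentralSeries_eq_posFittingComp] at h
  exact h.symm

end LieModule

namespace LeibnizAlg

variable {F L : Type*} [Field F] [AddCommGroup L] [Module F L] (A : LeibnizAlg F L)

lemma mem_prod {M N : Submodule F L} {m n : L} (hm : m ∈ M) (hn : n ∈ N) :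
    A.bracket m n ∈ A.prod M N :=
  Submodule.subset_span ⟨m, hm, n, hn, rfl⟩

lemma prod_le {M N P : Submodule F L} (h : ∀ m ∈ M, ∀ n ∈ N, A.bracket m n ∈ P) :
    A.prod M N ≤ P :=
  Submodule.span_le.mpr fun _ ⟨m, hm, n, hn, hz⟩ => hz ▸ h m hm n hn

lemma prod_mono {M M' N N' : Submodule F L} (hM : M ≤ M') (hN : N ≤ N') :
    A.prod M N ≤ A.prod M' N' :=
  A.prod_le fun _ hm _ hn => A.mem_prod (hM hm) (hN hn)

lemma prod_sup_left_le (M M' N : Submodule F L) :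
    A.prod (M ⊔ M') N ≤ A.prod M N ⊔ A.prod M' N := by
  refine A.prod_le fun m hm n hn => ?_
  obtain ⟨a, ha, b, hb, rfl⟩ := Submodule.mem_sup.mp hm
  rw [map_add, LinearMap.add_apply]
  exact add_mem (Submodule.mem_sup_left (A.mem_prod ha hn))
    (Submodule.mem_sup_right (A.mem_prod hb hn))

lemma prod_sup_right_le (M N N' : Submodule F L) :
    A.prod M (N ⊔ N') ≤ A.prod M N ⊔ A.prod M N' := by
  refine A.prod_le fun m hm n hn => ?_
  obtain ⟨a, ha, b, hb, rfl⟩ := Submodule.mem_sup.mp hn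
  rw [map_add]
  exact add_mem (Submodule.mem_sup_left (A.mem_prod hm ha))
    (Submodule.mem_sup_right (A.mem_prod hm hb))

@[simp] lemma prod_bot_left (N : Submodule F L) : A.prod ⊥ N = ⊥ :=
  eq_bot_iff.mpr <| A.prod_le fun m hm n _ => by simp [(Submodule.mem_bot F).mp hm]

lemma bracket_mem_derSeries_one (x y : L) : A.bracket x y ∈ A.derSeries 1 :=
  A.mem_prod trivial trivial

lemma prod_le_derSeries_one (M N : Submodule F L) : A.prod M N ≤ A.derSeries 1 :=
  A.prod_le fun x _ y _ => A.bracket_mem_derSeries_one x y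

lemma isIdeal_of_bracket_mem {I : Submodule F L} (hr : ∀ x, ∀ z ∈ I, A.bracket z x ∈ I)
    (hl : ∀ x, ∀ z ∈ I, A.bracket x z ∈ I) : A.IsIdeal I :=
  ⟨A.prod_le fun z hz x _ => hr x z hz, A.prod_le fun x _ z hz => hl x z hz⟩

lemma lcs_eq_iterate (U : Submodule F L) (k : ℕ) : A.lcs U k = (A.prod · U)^[k] U := by
  induction k with
  | zero => rfl
  | succ k ih => rw [Function.iterate_succ_apply', ← ih]; rfl

lemma iterate_prod_eq_bot_of_le {U P : Submodule F L} {n m : ℕ}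
    (hn : (A.prod · U)^[n] P = ⊥) (hnm : n ≤ m) : (A.prod · U)^[m] P = ⊥ := by
  obtain ⟨j, rfl⟩ := Nat.exists_eq_add_of_le' hnm
  rw [Function.iterate_add_apply, hn]
  exact Function.iterate_fixed (A.prod_bot_left U) j

variable {A}

lemma IsIdeal.prod_left_le {I : Submodule F L} (hI : A.IsIdeal I) (M : Submodule F L) :
    A.prod M I ≤ I :=
  (A.prod_mono le_top le_rfl).trans hI.2

lemma IsIdeal.prod_right_le {I : Submodule F L} (hI : A.IsIdeal I) (M : Submodule F L) :
    A.prod I M ≤ I :=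
  (A.prod_mono le_rfl le_top).trans hI.1

lemma IsSubalgebra.sup_of_isIdeal {U I : Submodule F L} (hU : A.IsSubalgebra U)
    (hI : A.IsIdeal I) : A.IsSubalgebra (U ⊔ I) := by
  refine (A.prod_sup_left_le _ _ _).trans (sup_le ?_ (le_sup_of_le_right (hI.prod_right_le _)))
  exact (A.prod_sup_right_le _ _ _).trans (sup_le_sup hU (hI.prod_left_le _))

variable (A) in
def rightMul : L →ₗ[F] Module.End F (A.derSeries 1) where
  toFun x := (A.bracket.flip x).restrict fun b _ => A.bracket_mem_derSeries_one b x
  map_add' x y := LinearMap.ext fun b => Subtype.ext (map_add (A.bracket b) x y)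
  map_smul' c x := LinearMap.ext fun b => Subtype.ext (map_smul (A.bracket b) c x)

@[simp] lemma rightMul_apply_coe (x : L) (b : A.derSeries 1) :
    (A.rightMul x b : L) = A.bracket b x :=
  rfl

variable (A) in
def leftMul (x : L) : Module.End F (A.derSeries 1) :=
  (A.bracket x).restrict fun b _ => A.bracket_mem_derSeries_one x b

lemma rightMul_pow_apply_mem_lcs {U : Submodule F L} {u : L} (hu : u ∈ U) {b : A.derSeries 1}
    (hb : (b : L) ∈ U) (k : ℕ) : ((A.rightMul u ^ k) b : L) ∈ A.lcs U k := by
  induction k with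
  | zero => exact hb
  | succ k ih =>
    rw [pow_succ', Module.End.mul_apply, rightMul_apply_coe]
    exact A.mem_prod ih hu

lemma prod_eq_bot_of_le_derSeries_one (hmeta : A.derSeries 2 = ⊥) {M N : Submodule F L}
    (hM : M ≤ A.derSeries 1) (hN : N ≤ A.derSeries 1) : A.prod M N = ⊥ :=
  eq_bot_iff.mpr <| (A.prod_mono hM hN).trans hmeta.le

lemma bracket_eq_zero_of_mem_derSeries_one (hmeta : A.derSeries 2 = ⊥) {b c : L}
    (hb : b ∈ A.derSeries 1) (hc : c ∈ A.derSeries 1) : A.bracket b c = 0 := by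
  have h : A.bracket b c ∈ A.derSeries 2 := A.mem_prod hb hc
  rwa [hmeta, Submodule.mem_bot] at h

lemma bracket_bracket_right_comm (hmeta : A.derSeries 2 = ⊥) {b : L} (hb : b ∈ A.derSeries 1)
    (x y : L) :
    A.bracket (A.bracket b x) y = A.bracket (A.bracket b y) x := by
  have h := A.leibniz b x y
  rwa [bracket_eq_zero_of_mem_derSeries_one hmeta hb (A.bracket_mem_derSeries_one x y),
    eq_comm, sub_eq_zero] at h

lemma bracket_bracket_assoc (hmeta : A.derSeries 2 = ⊥) {b : L} (hb : b ∈ A.derSeries 1)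
    (x y : L) :
    A.bracket x (A.bracket b y) = A.bracket (A.bracket x b) y := by
  simpa [bracket_eq_zero_of_mem_derSeries_one hmeta (A.bracket_mem_derSeries_one x y) hb]
    using A.leibniz x b y

lemma lcs_sup_succ_le (hmeta : A.derSeries 2 = ⊥) {U I : Submodule F L} (hI : A.IsIdeal I)
    (hIB : I ≤ A.derSeries 1) (k : ℕ) : A.lcs (U ⊔ I) (k + 1) ≤ A.lcs U (k + 1) ⊔ (A.prod · U)^[k] I := by
  induction k with
  | zero =>
    refine (A.prod_sup_left_le _ _ _).trans (sup_le ?_ (le_sup_of_le_right (hI.prod_right_le _)))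
    exact (A.prod_sup_right_le _ _ _).trans (sup_le_sup_left (hI.prod_left_le _) _)
  | succ k ih =>
    have hI_ann : A.prod (A.lcs (U ⊔ I) (k + 1)) I = ⊥ :=
      prod_eq_bot_of_le_derSeries_one hmeta (A.prod_le_derSeries_one _ _) hIB
    calc A.prod (A.lcs (U ⊔ I) (k + 1)) (U ⊔ I)
        ≤ A.prod (A.lcs (U ⊔ I) (k + 1)) U := by
          simpa [hI_ann] using A.prod_sup_right_le (A.lcs (U ⊔ I) (k + 1)) U I
      _ ≤ A.prod (A.lcs U (k + 1) ⊔ (A.prod · U)^[k] I) U := A.prod_mono ih le_rfl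
      _ ≤ A.lcs U (k + 2) ⊔ (A.prod · U)^[k + 1] I := by
          rw [Function.iterate_succ_apply']
          exact A.prod_sup_left_le _ _ _

lemma isNilpotentSub_sup (hmeta : A.derSeries 2 = ⊥) {U I : Submodule F L}
    (hU : A.IsNilpotentSub U) (hI : A.IsIdeal I) (hIB : I ≤ A.derSeries 1) (hIU : ∃ n, (A.prod · U)^[n] I = ⊥) :
    A.IsNilpotentSub (U ⊔ I) := by
  obtain ⟨m, hm⟩ := hU
  obtain ⟨n, hn⟩ := hIU
  rw [lcs_eq_iterate] at hm
  refine ⟨m + n + 1, eq_bot_iff.mpr ((lcs_sup_succ_le hmeta hI hIB _).trans ?_)⟩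
  rw [lcs_eq_iterate, A.iterate_prod_eq_bot_of_le hm (by omega),
    A.iterate_prod_eq_bot_of_le hn (by omega), sup_bot_eq]

lemma commute_rightMul_rightMul (hmeta : A.derSeries 2 = ⊥) (x y : L) :
    Commute (A.rightMul x) (A.rightMul y) :=
  LinearMap.ext fun b => Subtype.ext (bracket_bracket_right_comm hmeta b.2 y x)

lemma commute_rightMul_leftMul (hmeta : A.derSeries 2 = ⊥) (x y : L) :
    Commute (A.rightMul x) (A.leftMul y) :=
  LinearMap.ext fun b => Subtype.ext (bracket_bracket_assoc hmeta b.2 y x).symm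

variable (A) in
def rightMulAlg (hmeta : A.derSeries 2 = ⊥) (U : Submodule F L) :
    LieSubalgebra F (Module.End F (A.derSeries 1)) where
  toSubmodule := U.map A.rightMul
  lie_mem' := by
    rintro _ _ ⟨x, -, rfl⟩ ⟨y, -, rfl⟩
    rw [Ring.lie_def, (commute_rightMul_rightMul hmeta x y).eq, sub_self]
    exact (U.map A.rightMul).zero_mem

section RightMulAlg

variable {hmeta : A.derSeries 2 = ⊥} {U : Submodule F L}

instance : IsLieAbelian (A.rightMulAlg hmeta U) where
  trivial := by
    rintro ⟨_, x, -, rfl⟩ ⟨_, y, -, rfl⟩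
    exact Subtype.ext (by
      simp [LieSubalgebra.coe_bracket, Ring.lie_def, (commute_rightMul_rightMul hmeta x y).eq])

lemma isIdeal_map_of_forall_commute {N : Submodule F (A.derSeries 1)}
    (hN : ∀ f : Module.End F (A.derSeries 1), (∀ t ∈ A.rightMulAlg hmeta U, Commute t f) →
      ∀ m ∈ N, f m ∈ N) :
    A.IsIdeal (N.map (A.derSeries 1).subtype) := by
  have hT {f : Module.End F (A.derSeries 1)} (hf : ∀ u, Commute (A.rightMul u) f) :
      ∀ t ∈ A.rightMulAlg hmeta U, Commute t f := by
    rintro _ ⟨u, -, rfl⟩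
    exact hf u
  refine A.isIdeal_of_bracket_mem ?_ ?_
  · rintro x _ ⟨m, hm, rfl⟩
    exact ⟨_, hN _ (hT fun u => commute_rightMul_rightMul hmeta u x) m hm, rfl⟩
  · rintro x _ ⟨m, hm, rfl⟩
    exact ⟨_, hN _ (hT fun u => commute_rightMul_leftMul hmeta u x) m hm, rfl⟩

lemma map_lie_top_eq_prod (N : LieSubmodule F (A.rightMulAlg hmeta U) (A.derSeries 1)) :
    ⁅(⊤ : LieIdeal F (A.rightMulAlg hmeta U)), N⁆.toSubmodule.map (A.derSeries 1).subtype =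
      A.prod (N.toSubmodule.map (A.derSeries 1).subtype) U := by
  rw [LieSubmodule.lieIdeal_oper_eq_linear_span', Submodule.map_span, prod]
  congr 1
  ext z
  constructor
  · rintro ⟨_, ⟨⟨_, u, hu, rfl⟩, -, n, hn, rfl⟩, rfl⟩
    exact ⟨n, ⟨n, hn, rfl⟩, u, hu, rfl⟩
  · rintro ⟨_, ⟨n, hn, rfl⟩, u, hu, rfl⟩
    exact ⟨_, ⟨⟨A.rightMul u, u, hu, rfl⟩, trivial, n, hn, rfl⟩, rfl⟩

lemma map_lcs_eq_iterate_prod (N : LieSubmodule F (A.rightMulAlg hmeta U) (A.derSeries 1))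
    (k : ℕ) : (N.lcs k).toSubmodule.map (A.derSeries 1).subtype =
      (A.prod · U)^[k] (N.toSubmodule.map (A.derSeries 1).subtype) := by
  induction k with
  | zero => rfl
  | succ k ih =>
    rw [LieSubmodule.lcs_succ, map_lie_top_eq_prod, ih, Function.iterate_succ_apply']

lemma inf_derSeries_one_le_map_genWeightSpace_zero (hU : A.IsNilpotentSub U) :
    U ⊓ A.derSeries 1 ≤ (LieModule.genWeightSpace (A.derSeries 1)
      (0 : A.rightMulAlg hmeta U → F)).toSubmodule.map (A.derSeries 1).subtype := by
  rintro z ⟨hzU, hzB⟩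
  refine Submodule.mem_map.mpr ⟨⟨z, hzB⟩, ?_, rfl⟩
  rw [LieSubmodule.mem_toSubmodule, LieModule.mem_genWeightSpace]
  rintro ⟨_, u, hu, rfl⟩
  obtain ⟨n, hn⟩ := hU
  refine ⟨n, ?_⟩
  simp only [Pi.zero_apply, zero_smul, sub_zero]
  change (A.rightMul u ^ n) ⟨z, hzB⟩ = 0
  have h := rightMul_pow_apply_mem_lcs hu (b := ⟨z, hzB⟩) hzU n
  rwa [hn, Submodule.mem_bot, ZeroMemClass.coe_eq_zero] at h

end RightMulAlg

end LeibnizAlg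

open LeibnizAlg LieModule

/-- Let `L` be a metabelian Leibniz algebra and `U` a maximal nilpotent
subalgebra of `L`.  Then `U ∩ L²` is an abelian ideal of `L`, and
`L² = (U ∩ L²) ⊕ K` for an ideal `K` of `L` with `[K, U] = K`. -/
theorem maximal_nilpotent_subalgebra_of_metabelian
    {F L : Type*} [Field F] [AddCommGroup L] [Module F L] [FiniteDimensional F L]
    (A : LeibnizAlg F L) (hmeta : A.derSeries 2 = ⊥)
    (U : Submodule F L) (hU : A.IsMaxNilpotentSubalgebra U) :
    A.IsIdeal (U ⊓ A.derSeries 1) ∧ A.IsAbelian (U ⊓ A.derSeries 1) ∧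
    ∃ K : Submodule F L, A.IsIdeal K ∧
      (U ⊓ A.derSeries 1) ⊓ K = ⊥ ∧ (U ⊓ A.derSeries 1) ⊔ K = A.derSeries 1 ∧
      A.prod (U ⊓ A.derSeries 1) K = ⊥ ∧ A.prod K (U ⊓ A.derSeries 1) = ⊥ ∧
      A.prod K U = K := by
  obtain ⟨hUsub, hUnil, hUmax⟩ := hU
  let T := A.rightMulAlg hmeta U
  let B := A.derSeries 1
  let W₀ := genWeightSpace B (0 : T → F)
  let W₁ := posFittingComp F T B
  have hW₀ : A.IsIdeal (W₀.toSubmodule.map B.subtype) :=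
    isIdeal_map_of_forall_commute fun _ hf _ => mem_genWeightSpace_of_commute hf
  have hW₁ : A.IsIdeal (W₁.toSubmodule.map B.subtype) :=
    isIdeal_map_of_forall_commute fun _ hf _ => mem_posFittingComp_of_commute hf
  have hW₀_nil : ∃ n, (A.prod · U)^[n] (W₀.toSubmodule.map B.subtype) = ⊥ := by
    obtain ⟨n, hn⟩ := (LieSubmodule.isNilpotent_iff_exists_lcs_eq_bot W₀).mp inferInstance
    refine ⟨n, ?_⟩
    rw [← map_lcs_eq_iterate_prod, hn, LieSubmodule.bot_toSubmodule, Submodule.map_bot]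
  have hUB : U ⊓ B = W₀.toSubmodule.map B.subtype := by
    refine le_antisymm (inf_derSeries_one_le_map_genWeightSpace_zero hUnil)
      (le_inf ?_ (Submodule.map_subtype_le _ _))
    rw [← hUmax _ (hUsub.sup_of_isIdeal hW₀)
      (isNilpotentSub_sup hmeta hUnil hW₀ (Submodule.map_subtype_le _ _) hW₀_nil) le_sup_left]
    exact le_sup_right
  have hB_sq (M N : Submodule F B) : A.prod (M.map B.subtype) (N.map B.subtype) = ⊥ :=
    prod_eq_bot_of_le_derSeries_one hmeta (Submodule.map_subtype_le _ _)
      (Submodule.map_subtype_le _ _)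
  have hcompl := isCompl_genWeightSpace_zero_posFittingComp F T B
  rw [hUB]
  refine ⟨hW₀, hB_sq _ _, W₁.toSubmodule.map B.subtype, hW₁, ?_, ?_, hB_sq _ _, hB_sq _ _,
    ?_⟩
  · rw [← Submodule.map_inf _ B.injective_subtype, ← LieSubmodule.inf_toSubmodule,
      hcompl.inf_eq_bot, LieSubmodule.bot_toSubmodule, Submodule.map_bot]
  · rw [← Submodule.map_sup, ← LieSubmodule.sup_toSubmodule, hcompl.sup_eq_top,
      LieSubmodule.top_toSubmodule, Submodule.map_top, Submodule.range_subtype]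
  · rw [← map_lie_top_eq_prod, lie_top_posFittingComp]
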